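/- arXiv:2007.06793 — 8 statements merged into one kernel-verified Lean document; each statement's English description precedes it below -/
import Mathlib

section
/- Let S be a finite nonempty type and let P and Q be probability mass functions on S with Q(s) > 0 for all s. Then for every function g : S → ℝ, ∑_{s} P(s)·g(s) − ∑_{s} Q(s)·exp(g(s) − 1) ≤ ∑_{s : P(s) > 0} P(s)·log(P(s)/Q(s)), i.e., the variational objective E_P[g] − E_Q[e^{g−1}] is a lower bound for the Kullback–Leibler divergence KL(P‖Q). -/
open Real Finset

/-- The pointwise Fenchel–Young inequality behind the theorem: `x ↦ q e^{x-1}` is the convex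
conjugate of `p ↦ p log (p / q)`. -/
lemma mul_sub_mul_exp_sub_one_le_mul_log_div {p q : ℝ} (hp : 0 < p) (hq : 0 < q) (t : ℝ) :
    p * t - q * exp (t - 1) ≤ p * log (p / q) := by
  have hexp : q * exp (t - 1) = p * exp (t - 1 - log (p / q)) := by
    rw [exp_sub (t - 1), exp_log (div_pos hp hq)]
    field_simp
  have hlin : p * (t - log (p / q)) ≤ p * exp (t - 1 - log (p / q)) := by
    gcongr
    linarith [add_one_le_exp (t - 1 - log (p / q))]
  linarith

lemma mul_sub_mul_exp_sub_one_le_ite {p q : ℝ} (hp : 0 ≤ p) (hq : 0 < q) (t : ℝ) :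
    p * t - q * exp (t - 1) ≤ if 0 < p then p * log (p / q) else 0 := by
  split_ifs with hpos
  · exact mul_sub_mul_exp_sub_one_le_mul_log_div hpos hq t
  · rw [le_antisymm (not_lt.mp hpos) hp]
    nlinarith [exp_pos (t - 1)]

theorem variational_lower_bound_KL_general {S : Type*} [Fintype S]
    (P Q : S → ℝ)
    (hP0 : ∀ s, 0 ≤ P s)
    (hQ0 : ∀ s, 0 < Q s)
    (g : S → ℝ) :
    (∑ s, P s * g s) - (∑ s, Q s * Real.exp (g s - 1)) ≤
      ∑ s ∈ Finset.univ.filter (fun s => 0 < P s), P s * Real.log (P s / Q s) := by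
  rw [← sum_sub_distrib, sum_filter]
  exact sum_le_sum fun s _ => mul_sub_mul_exp_sub_one_le_ite (hP0 s) (hQ0 s) (g s)

/-- the variational objective `E_P[g] − E_Q[e^{g−1}]` is a lower bound for the
Kullback–Leibler divergence `KL(P‖Q) = ∑_{s : P(s) > 0} P(s)·log(P(s)/Q(s))`. -/
theorem variational_lower_bound_KL {S : Type*} [Fintype S] [Nonempty S]
    (P Q : S → ℝ)
    (hP0 : ∀ s, 0 ≤ P s) (hP1 : ∑ s, P s = 1)
    (hQ0 : ∀ s, 0 < Q s) (hQ1 : ∑ s, Q s = 1)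
    (g : S → ℝ) :
    (∑ s, P s * g s) - (∑ s, Q s * Real.exp (g s - 1)) ≤
      ∑ s ∈ Finset.univ.filter (fun s => 0 < P s), P s * Real.log (P s / Q s) :=
  variational_lower_bound_KL_general P Q hP0 hQ0 g
end

section
/- Let S be a finite nonempty type and let P and Q be probability mass functions on S with P(s) > 0 and Q(s) > 0 for all s. If a function g : S → ℝ satisfies ∑_{s} P(s)·g(s) − ∑_{s} Q(s)·exp(g(s) − 1) = KL(P‖Q), then g(s) = 1 + log(P(s)/Q(s)) for every s ∈ S; i.e., the maximizer of the variational objective E_P[g] − E_Q[e^{g−1}] is unique and equals 1 + log of the density ratio. -/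
/-!
Put `t = g - 1 - log (P / Q)`. Since `Q e^{g-1} = P e^t`, the gap between `KL(P‖Q)` and the
objective is `∑ P (e^t - t - 1)`, a sum of terms that are nonnegative because `e^t ≥ 1 + t`
and that vanish only at `t = 0`.
-/

open Real Finset

lemma eq_zero_of_sum_mul_exp_sub_sub_one_eq_zero {ι : Type*} [Fintype ι] {w t : ι → ℝ}
    (hw : ∀ i, 0 < w i) (h : ∑ i, w i * (exp (t i) - t i - 1) = 0) (i : ι) : t i = 0 := by
  have hterm_nonneg : ∀ j ∈ univ, 0 ≤ w j * (exp (t j) - t j - 1) := fun j _ =>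
    mul_nonneg (hw j).le (by linarith [add_one_le_exp (t j)])
  have hterm_zero := (sum_eq_zero_iff_of_nonneg hterm_nonneg).1 h i (mem_univ i)
  by_contra hti
  have : 0 < w i * (exp (t i) - t i - 1) :=
    mul_pos (hw i) (by linarith [add_one_lt_exp hti])
  linarith

lemma mul_exp_eq_mul_exp_sub_log_div {p q : ℝ} (hp : 0 < p) (hq : 0 < q) (x : ℝ) :
    q * exp x = p * exp (x - log (p / q)) := by
  rw [exp_sub, exp_log (div_pos hp hq)]
  field_simp

theorem variational_bound_maximizer_unique_general {S : Type*} [Fintype S]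
    (P Q : S → ℝ)
    (hP0 : ∀ s, 0 < P s)
    (hQ0 : ∀ s, 0 < Q s)
    (g : S → ℝ)
    (hg : (∑ s, P s * g s) - (∑ s, Q s * Real.exp (g s - 1)) =
      ∑ s, P s * Real.log (P s / Q s)) :
    ∀ s, g s = 1 + Real.log (P s / Q s) := by
  set t : S → ℝ := fun s => g s - 1 - log (P s / Q s) with ht
  have hgap_term : ∀ s, P s * (exp (t s) - t s - 1) =
      P s * log (P s / Q s) - (P s * g s - Q s * exp (g s - 1)) := by
    intro s
    rw [mul_exp_eq_mul_exp_sub_log_div (hP0 s) (hQ0 s)]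
    ring
  have hgap : ∑ s, P s * (exp (t s) - t s - 1) = 0 := by
    simp only [hgap_term, sum_sub_distrib, hg, sub_self]
  intro s
  have hts := eq_zero_of_sum_mul_exp_sub_sub_one_eq_zero hP0 hgap s
  simp only [ht] at hts
  linarith

/-- if a function `g` attains equality in the variational lower bound for the
Kullback–Leibler divergence, i.e. `E_P[g] − E_Q[e^{g−1}] = KL(P‖Q)`, then
`g(s) = 1 + log(P(s)/Q(s))` for every `s`: the maximizer of the variational objective
is unique and equals `1 +` the log density ratio. -/
theorem variational_bound_maximizer_unique {S : Type*} [Fintype S] [Nonempty S]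
    (P Q : S → ℝ)
    (hP0 : ∀ s, 0 < P s) (hP1 : ∑ s, P s = 1)
    (hQ0 : ∀ s, 0 < Q s) (hQ1 : ∑ s, Q s = 1)
    (g : S → ℝ)
    (hg : (∑ s, P s * g s) - (∑ s, Q s * Real.exp (g s - 1)) =
      ∑ s, P s * Real.log (P s / Q s)) :
    ∀ s, g s = 1 + Real.log (P s / Q s) :=
  variational_bound_maximizer_unique_general P Q hP0 hQ0 g hg
end

section
/- Let M ≥ 2, let X_1, …, X_M and a label type C be finite and nonempty, and let W be a pmf on (X_1 × ⋯ × X_M) × C satisfying conditional independence given the label, with label prior p*_c > 0 for all c and data pmf P(x) := ∑_c W(x, c) having all marginals P_m strictly positive. Then for every x = (x_1, …, x_M), the joint-marginal ratio of P satisfies R(x) = ∑_{c ∈ C} (∏_{m=1}^M Pr(Y = c | X_m = x_m)) / (p*_c)^{M−1}, where Pr(Y = c | X_m = x_m) := (∑_{x' : x'_m = x_m} W(x', c)) / P_m(x_m). -/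
/-- The `m`-th marginal of a nonnegative function `P` on `X_1 × ⋯ × X_M`:
`P_m(x_m) := ∑_{x' : x'_m = x_m} P(x')`. -/
noncomputable def marginal {M : ℕ} {X : Fin M → Type*} [∀ m, Fintype (X m)]
    [∀ m, DecidableEq (X m)] (P : (∀ m, X m) → ℝ) (m : Fin M) (xm : X m) : ℝ :=
  ∑ x' : ∀ m', X m', if x' m = xm then P x' else 0

/-- The label prior `p*_c := ∑_x W(x, c)` of a pmf `W` on `(X_1 × ⋯ × X_M) × C`. -/
noncomputable def labelPrior {M : ℕ} {X : Fin M → Type*} {C : Type*} [∀ m, Fintype (X m)]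
    (W : ((∀ m, X m) × C) → ℝ) (c : C) : ℝ :=
  ∑ x : ∀ m, X m, W (x, c)

/-- The conditional pmf on `X_1 × ⋯ × X_M` given label `c`: `W(x|Y=c) := W(x,c)/p*_c`. -/
noncomputable def condGivenLabel {M : ℕ} {X : Fin M → Type*} {C : Type*} [∀ m, Fintype (X m)]
    (W : ((∀ m, X m) × C) → ℝ) (c : C) (x : ∀ m, X m) : ℝ :=
  W (x, c) / labelPrior W c

/-- `W` satisfies conditional independence given the label: for every `c` with `p*_c > 0`
and every `x`, `W(x|Y=c) = ∏_m Pr(X_m = x_m | Y = c)`. -/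
def CondIndep {M : ℕ} {X : Fin M → Type*} {C : Type*} [∀ m, Fintype (X m)]
    [∀ m, DecidableEq (X m)] (W : ((∀ m, X m) × C) → ℝ) : Prop :=
  ∀ c, 0 < labelPrior W c → ∀ x : ∀ m, X m,
    condGivenLabel W c x = ∏ m, marginal (condGivenLabel W c) m (x m)

/-- The data pmf `P(x) := ∑_c W(x, c)`. -/
noncomputable def dataPmf {M : ℕ} {X : Fin M → Type*} {C : Type*} [Fintype C]
    (W : ((∀ m, X m) × C) → ℝ) (x : ∀ m, X m) : ℝ :=
  ∑ c, W (x, c)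

/-- The posterior of the `m`-th modality:
`Pr(Y = c | X_m = x_m) := (∑_{x' : x'_m = x_m} W(x', c)) / P_m(x_m)`. -/
noncomputable def posterior {M : ℕ} {X : Fin M → Type*} {C : Type*} [∀ m, Fintype (X m)]
    [∀ m, DecidableEq (X m)] [Fintype C]
    (W : ((∀ m, X m) × C) → ℝ) (m : Fin M) (xm : X m) (c : C) : ℝ :=
  (∑ x' : ∀ m', X m', if x' m = xm then W (x', c) else 0) / marginal (dataPmf W) m xm

/-- under conditional independence given the label (with strictly positive
label prior and strictly positive marginals of the data pmf), the joint-marginal ratio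
satisfies `R(x) = ∑_c (∏_m Pr(Y = c | X_m = x_m)) / (p*_c)^{M−1}`. -/
theorem jmRatio_eq_sum_posterior_products {M : ℕ} (hM : 2 ≤ M)
    (X : Fin M → Type*) [∀ m, Fintype (X m)] [∀ m, Nonempty (X m)] [∀ m, DecidableEq (X m)]
    (C : Type*) [Fintype C] [Nonempty C]
    (W : ((∀ m, X m) × C) → ℝ)
    (hW0 : ∀ z, 0 ≤ W z) (hW1 : ∑ z, W z = 1)
    (hCI : CondIndep W)
    (hprior : ∀ c, 0 < labelPrior W c)
    (hmarg : ∀ m (xm : X m), 0 < marginal (dataPmf W) m xm) :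
    ∀ x : ∀ m, X m,
      dataPmf W x / ∏ m, marginal (dataPmf W) m (x m) =
        ∑ c, (∏ m, posterior W m (x m) c) / (labelPrior W c) ^ (M - 1) := by
  intro x
  have hPpos : ∀ m, 0 < marginal (dataPmf W) m (x m) := fun m => hmarg m (x m)
  have hPprod : 0 < ∏ m, marginal (dataPmf W) m (x m) :=
    Finset.prod_pos (fun m _ => hPpos m)
  have key : ∀ c, W (x, c) =
      (∏ m, ∑ x' : ∀ m', X m', if x' m = x m then W (x', c) else 0)
        / (labelPrior W c) ^ (M - 1) := by
    intro c
    have hc := hprior c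
    have h := hCI c hc x
    have hm : ∀ m, marginal (condGivenLabel W c) m (x m)
        = (∑ x' : ∀ m', X m', if x' m = x m then W (x', c) else 0) / labelPrior W c := by
      intro m
      unfold marginal condGivenLabel
      rw [Finset.sum_div]
      refine Finset.sum_congr rfl fun x' _ => ?_
      split <;> simp
    rw [condGivenLabel] at h
    have hW : W (x, c) = labelPrior W c * ∏ m, marginal (condGivenLabel W c) m (x m) := by
      rw [← h]; field_simp
    rw [hW]
    simp only [hm]
    rw [Finset.prod_div_distrib, Finset.prod_const, Finset.card_univ, Fintype.card_fin]
    have hMsplit : (labelPrior W c) ^ M = (labelPrior W c) ^ (M - 1) * labelPrior W c := by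
      rw [← pow_succ]
      congr 1
      omega
    rw [hMsplit]
    field_simp
  have hpost : ∀ c, ∏ m, posterior W m (x m) c =
      (∏ m, ∑ x' : ∀ m', X m', if x' m = x m then W (x', c) else 0)
        / ∏ m, marginal (dataPmf W) m (x m) := by
    intro c
    unfold posterior
    rw [Finset.prod_div_distrib]
  rw [dataPmf, Finset.sum_div]
  refine Finset.sum_congr rfl fun c _ => ?_
  rw [key c, hpost c]
  rw [div_div, div_div, mul_comm]
end

section
/- Let M ≥ 2, let X_1, …, X_M and a label type C be finite and nonempty, and let W be a pmf on (X_1 × ⋯ × X_M) × C satisfying conditional independence given the label, with label prior p*_c > 0 for all c and data pmf P(x) := ∑_c W(x, c) strictly positive. Then the function g(x) := 1 + log(∑_{c ∈ C} (∏_{m=1}^M Pr(Y = c | X_m = x_m)) / (p*_c)^{M−1}) attains the supremum in the dual representation of total correlation: ∑_x P(x)·g(x) − ∑_x (∏_{m=1}^M P_m(x_m))·exp(g(x) − 1) = TC(P). -/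
/-- The total correlation `TC(P) := ∑_x P(x)·log(P(x)/∏_m P_m(x_m))`. -/
noncomputable def totalCorrelation {M : ℕ} {X : Fin M → Type*} [∀ m, Fintype (X m)]
    [∀ m, DecidableEq (X m)] (P : (∀ m, X m) → ℝ) : ℝ :=
  ∑ x : ∀ m, X m, P x * Real.log (P x / ∏ m, marginal P m (x m))

/-- under conditional independence given the label (strictly positive prior and
data pmf), the optimal dual witness `g(x) := 1 + log(∑_c (∏_m Pr(Y=c|X_m=x_m))/(p*_c)^{M−1})`
attains the supremum in the dual representation of total correlation:
`∑_x P(x)·g(x) − ∑_x (∏_m P_m(x_m))·exp(g(x) − 1) = TC(P)`. -/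
theorem optimal_reward_attains_totalCorrelation {M : ℕ} (hM : 2 ≤ M)
    (X : Fin M → Type*) [∀ m, Fintype (X m)] [∀ m, Nonempty (X m)] [∀ m, DecidableEq (X m)]
    (C : Type*) [Fintype C] [Nonempty C]
    (W : ((∀ m, X m) × C) → ℝ)
    (hW0 : ∀ z, 0 ≤ W z) (hW1 : ∑ z, W z = 1)
    (hCI : CondIndep W)
    (hprior : ∀ c, 0 < labelPrior W c)
    (hP : ∀ x : ∀ m, X m, 0 < dataPmf W x) :
    (∑ x : ∀ m, X m, dataPmf W x *
        (1 + Real.log (∑ c, (∏ m, posterior W m (x m) c) / (labelPrior W c) ^ (M - 1)))) -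
      (∑ x : ∀ m, X m, (∏ m, marginal (dataPmf W) m (x m)) *
        Real.exp ((1 + Real.log
          (∑ c, (∏ m, posterior W m (x m) c) / (labelPrior W c) ^ (M - 1))) - 1)) =
      totalCorrelation (dataPmf W) := by
  classical
  -- positivity of marginals of P
  have hPm : ∀ (m : Fin M) (xm : X m), 0 < marginal (dataPmf W) m xm := by
    intro m xm
    have hx0 : ∃ x0 : ∀ m', X m', x0 m = xm :=
      ⟨Function.update (Classical.arbitrary _) m xm, by simp⟩
    obtain ⟨x0, hx0⟩ := hx0
    unfold marginal
    refine Finset.sum_pos' (fun x' _ => ?_) ⟨x0, Finset.mem_univ _, ?_⟩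
    · split
      · exact (hP x').le
      · exact le_refl 0
    · simpa [hx0] using hP x0
  have hQ : ∀ x : ∀ m, X m, 0 < ∏ m, marginal (dataPmf W) m (x m) :=
    fun x => Finset.prod_pos fun m _ => hPm m (x m)
  -- marginal of conditional
  have hmc : ∀ (c : C) (m : Fin M) (xm : X m),
      (∑ x' : ∀ m', X m', if x' m = xm then W (x', c) else 0)
        = labelPrior W c * marginal (condGivenLabel W c) m xm := by
    intro c m xm
    unfold marginal condGivenLabel
    rw [Finset.mul_sum]
    refine Finset.sum_congr rfl fun x' _ => ?_
    split
    · rw [mul_div_cancel₀ _ (hprior c).ne']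
    · ring
  -- key identity: the dual witness argument equals P(x)/∏ P_m(x_m)
  have hkey : ∀ x : ∀ m, X m,
      (∑ c, (∏ m, posterior W m (x m) c) / (labelPrior W c) ^ (M - 1))
        = dataPmf W x / ∏ m, marginal (dataPmf W) m (x m) := by
    intro x
    have : ∀ c : C, (∏ m, posterior W m (x m) c) / (labelPrior W c) ^ (M - 1)
        = W (x, c) / ∏ m, marginal (dataPmf W) m (x m) := by
      intro c
      have hprod : (∏ m, posterior W m (x m) c)
          = (labelPrior W c) ^ M * (W (x, c) / labelPrior W c)
              / ∏ m, marginal (dataPmf W) m (x m) := by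
        unfold posterior
        rw [Finset.prod_div_distrib]
        congr 1
        calc (∏ m, ∑ x' : ∀ m', X m', if x' m = x m then W (x', c) else 0)
            = ∏ m, labelPrior W c * marginal (condGivenLabel W c) m (x m) := by
              refine Finset.prod_congr rfl fun m _ => hmc c m (x m)
          _ = (labelPrior W c) ^ M * ∏ m, marginal (condGivenLabel W c) m (x m) := by
              rw [Finset.prod_mul_distrib, Finset.prod_const, Finset.card_univ,
                Fintype.card_fin]
          _ = (labelPrior W c) ^ M * (W (x, c) / labelPrior W c) := by
              rw [← hCI c (hprior c) x]; rfl
      rw [hprod]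
      have hpow : (labelPrior W c) ^ M = (labelPrior W c) ^ (M - 1) * labelPrior W c := by
        rw [← pow_succ, Nat.sub_add_cancel (le_trans one_le_two hM)]
      rw [hpow]
      have hpc := (hprior c).ne'
      have hpc1 : (labelPrior W c) ^ (M - 1) ≠ 0 := pow_ne_zero _ hpc
      have hQx := (hQ x).ne'
      field_simp
    rw [Finset.sum_congr rfl fun c _ => this c, ← Finset.sum_div]
    rfl
  -- the second sum equals 1
  have hsum1 : ∑ x : ∀ m, X m, dataPmf W x = 1 := by
    unfold dataPmf
    rw [← hW1, Fintype.sum_prod_type]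
  have hsecond : (∑ x : ∀ m, X m, (∏ m, marginal (dataPmf W) m (x m)) *
        Real.exp ((1 + Real.log
          (∑ c, (∏ m, posterior W m (x m) c) / (labelPrior W c) ^ (M - 1))) - 1)) = 1 := by
    rw [← hsum1]
    refine Finset.sum_congr rfl fun x _ => ?_
    rw [hkey x]
    have hpos : 0 < dataPmf W x / ∏ m, marginal (dataPmf W) m (x m) :=
      div_pos (hP x) (hQ x)
    rw [add_sub_cancel_left, Real.exp_log hpos,
      mul_div_cancel₀ _ (hQ x).ne']
  rw [hsecond]
  unfold totalCorrelation
  have hfirst : (∑ x : ∀ m, X m, dataPmf W x *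
        (1 + Real.log (∑ c, (∏ m, posterior W m (x m) c) / (labelPrior W c) ^ (M - 1))))
      = (∑ x : ∀ m, X m, dataPmf W x) + ∑ x : ∀ m, X m, dataPmf W x *
          Real.log (dataPmf W x / ∏ m, marginal (dataPmf W) m (x m)) := by
    rw [← Finset.sum_add_distrib]
    refine Finset.sum_congr rfl fun x _ => ?_
    rw [hkey x]; ring
  rw [hfirst, hsum1]
  ring
end

section
/- Let M ≥ 2, let X_1, …, X_M and a label type C be finite and nonempty, and let W be a pmf on (X_1 × ⋯ × X_M) × C satisfying conditional independence given the label, with label prior p*_c > 0 for all c and data pmf P(x) := ∑_c W(x, c) strictly positive. Then the expectation under the product of marginals of the aggregated posterior score equals 1: ∑_x (∏_{m=1}^M P_m(x_m)) · ∑_{c ∈ C} (∏_{m=1}^M Pr(Y = c | X_m = x_m)) / (p*_c)^{M−1} = 1. -/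
/-- under conditional independence given the label (strictly positive prior and
data pmf), the expectation under the product of marginals of the aggregated posterior score
equals 1: `∑_x (∏_m P_m(x_m)) · ∑_c (∏_m Pr(Y=c|X_m=x_m))/(p*_c)^{M−1} = 1`. -/
theorem product_marginal_expectation_of_score_eq_one {M : ℕ} (hM : 2 ≤ M)
    (X : Fin M → Type*) [∀ m, Fintype (X m)] [∀ m, Nonempty (X m)] [∀ m, DecidableEq (X m)]
    (C : Type*) [Fintype C] [Nonempty C]
    (W : ((∀ m, X m) × C) → ℝ)
    (hW0 : ∀ z, 0 ≤ W z) (hW1 : ∑ z, W z = 1)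
    (hCI : CondIndep W)
    (hprior : ∀ c, 0 < labelPrior W c)
    (hP : ∀ x : ∀ m, X m, 0 < dataPmf W x) :
    ∑ x : ∀ m, X m, (∏ m, marginal (dataPmf W) m (x m)) *
      (∑ c, (∏ m, posterior W m (x m) c) / (labelPrior W c) ^ (M - 1)) = 1 := by
  classical
  have hPm : ∀ (m : Fin M) (xm : X m), 0 < marginal (dataPmf W) m xm := by
    intro m xm
    unfold marginal
    obtain ⟨x0, hx0⟩ : ∃ x : ∀ m', X m', x m = xm :=
      ⟨Function.update (Classical.arbitrary _) m xm, by simp⟩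
    refine Finset.sum_pos' (fun i _ => ?_) ⟨x0, Finset.mem_univ _, by
      simp [hx0, (hP x0).le, hP x0]⟩
    split
    · exact (hP i).le
    · exact le_refl 0
  have hsum_m : ∀ (m : Fin M) (c : C),
      (∑ xm : X m, ∑ x' : ∀ m', X m', if x' m = xm then W (x', c) else 0)
        = labelPrior W c := by
    intro m c
    rw [Finset.sum_comm]
    simp [labelPrior]
  have step1 : ∀ x : ∀ m, X m,
      (∏ m, marginal (dataPmf W) m (x m)) *
        (∑ c, (∏ m, posterior W m (x m) c) / labelPrior W c ^ (M - 1)) =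
      ∑ c, (∏ m, ∑ x' : ∀ m', X m', if x' m = x m then W (x', c) else 0)
          / labelPrior W c ^ (M - 1) := by
    intro x
    rw [Finset.mul_sum]
    refine Finset.sum_congr rfl fun c _ => ?_
    unfold posterior
    rw [Finset.prod_div_distrib]
    have h0 : (∏ m, marginal (dataPmf W) m (x m)) ≠ 0 :=
      ne_of_gt (Finset.prod_pos fun m _ => hPm m (x m))
    rw [div_div, mul_div_assoc', mul_div_mul_left _ _ h0]
  calc ∑ x : ∀ m, X m, (∏ m, marginal (dataPmf W) m (x m)) *
        (∑ c, (∏ m, posterior W m (x m) c) / labelPrior W c ^ (M - 1))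
      = ∑ x : ∀ m, X m, ∑ c,
          (∏ m, ∑ x' : ∀ m', X m', if x' m = x m then W (x', c) else 0)
            / labelPrior W c ^ (M - 1) :=
        Finset.sum_congr rfl fun x _ => step1 x
    _ = ∑ c, (∑ x : ∀ m, X m,
          ∏ m, ∑ x' : ∀ m', X m', if x' m = x m then W (x', c) else 0)
            / labelPrior W c ^ (M - 1) := by
        rw [Finset.sum_comm]
        simp [Finset.sum_div]
    _ = ∑ c, labelPrior W c := by
        refine Finset.sum_congr rfl fun c _ => ?_
        have : (∑ x : ∀ m, X m,
            ∏ m, ∑ x' : ∀ m', X m', if x' m = x m then W (x', c) else 0)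
            = labelPrior W c ^ M := by
          have hps := Finset.prod_univ_sum (fun m => (Finset.univ : Finset (X m)))
            (fun m xm => ∑ x' : ∀ m', X m', if x' m = xm then W (x', c) else 0)
          rw [Fintype.piFinset_univ] at hps
          rw [← hps]
          simp [hsum_m _ c]
        rw [this]
        have h2 : labelPrior W c ^ M = labelPrior W c ^ (M - 1) * labelPrior W c := by
          rw [← pow_succ, Nat.sub_add_cancel (by omega)]
        rw [h2]
        exact mul_div_cancel_left₀ _ (ne_of_gt (pow_pos (hprior c) _))
    _ = 1 := by
        rw [← hW1]
        simp only [labelPrior]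
        rw [Fintype.sum_prod_type, Finset.sum_comm]
end

section
/- Let M ≥ 2, let X_1, …, X_M and a label type C be finite and nonempty, and let W be a pmf on (X_1 × ⋯ × X_M) × C satisfying conditional independence given the label, with label prior p*_c > 0 for all c and data pmf P(x) := ∑_c W(x, c) strictly positive. Then for all classifiers h = (h^1, …, h^M) with h^m : X_m → Δ_C and all priors p ∈ Δ_C with p_c > 0 for all c, eTCg(h, p) ≤ eTCg(h*, p*), where h*^m(x_m)_c := Pr(Y = c | X_m = x_m) are the Bayesian posterior classifiers and p* is the label prior; that is, the Bayesian posterior classifiers together with the true prior maximize the expected total correlation gain. -/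
/-- The aggregated score `S_{h,p}(x) := ∑_c (∏_m h^m(x_m)_c) / (p_c)^{M−1}`. -/
noncomputable def score {M : ℕ} {X : Fin M → Type*} {C : Type*} [Fintype C]
    (h : ∀ m, X m → C → ℝ) (p : C → ℝ) (x : ∀ m, X m) : ℝ :=
  ∑ c, (∏ m, h m (x m) c) / (p c) ^ (M - 1)

/-- Extended-real logarithm with the convention `log 0 = −∞`. -/
noncomputable def elog (t : ℝ) : EReal := if t = 0 then ⊥ else ((Real.log t : ℝ) : EReal)

/-- The expected total correlation gain
`eTCg(h, p) := 1 + ∑_x P(x)·log S_{h,p}(x) − ∑_x (∏_m P_m(x_m))·S_{h,p}(x)`,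
as an extended real, with the convention `log 0 = −∞` (so the middle sum is `−∞` whenever
`S_{h,p}(x) = 0` for some `x` with `P(x) > 0`, since `0 · (−∞) = 0` in `EReal`). -/
noncomputable def eTCgE {M : ℕ} {X : Fin M → Type*} {C : Type*} [∀ m, Fintype (X m)]
    [∀ m, DecidableEq (X m)] [Fintype C]
    (P : (∀ m, X m) → ℝ) (h : ∀ m, X m → C → ℝ) (p : C → ℝ) : EReal :=
  1 + (∑ x : ∀ m, X m, (P x : EReal) * elog (score h p x)) -
    ((∑ x : ∀ m, X m, (∏ m, marginal P m (x m)) * score h p x : ℝ) : EReal)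

/-!
Under conditional independence, `∏ₘ Pr(Y = c | X_m = x_m) / (p*_c)^(M-1) = W(x, c) / ∏ₘ P_m(x_m)`,
so the Bayes score is `S* = P / Q` with `Q(x) = ∏ₘ P_m(x_m)`. Up to the constant `1`, eTCg is
`∑ₓ (P(x) log S(x) - Q(x) S(x))`, and by `log t ≤ t - 1` each summand is maximized at
`S(x) = P(x) / Q(x)`; a vanishing score makes eTCg equal to `-∞`.
-/

open Finset Real

lemma EReal.coe_finset_sum {ι : Type*} (s : Finset ι) (f : ι → ℝ) :
    ((∑ i ∈ s, f i : ℝ) : EReal) = ∑ i ∈ s, (f i : EReal) :=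
  map_sum (⟨⟨((↑) : ℝ → EReal), EReal.coe_zero⟩, EReal.coe_add⟩ : ℝ →+ EReal) f s

lemma mul_log_sub_mul_le_of_pos {a q s : ℝ} (ha : 0 < a) (hq : 0 < q) (hs : 0 < s) :
    a * log s - q * s ≤ a * log (a / q) - q * (a / q) := by
  have hlog := log_le_sub_one_of_pos (show 0 < s * q / a by positivity)
  rw [log_div (by positivity) ha.ne', log_mul hs.ne' hq.ne'] at hlog
  have hmul := mul_le_mul_of_nonneg_left hlog ha.le
  have hsq : a * (s * q / a - 1) = q * s - a := by field_simp
  rw [log_div ha.ne' hq.ne', mul_div_cancel₀ _ hq.ne']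
  nlinarith [hmul, hsq]

section Marginal

variable {M : ℕ} {X : Fin M → Type*} [∀ m, Fintype (X m)] [∀ m, DecidableEq (X m)]

lemma marginal_pos {P : (∀ m, X m) → ℝ} (hP : ∀ x, 0 ≤ P x) {x : ∀ m, X m} (hx : 0 < P x)
    (m : Fin M) : 0 < marginal P m (x m) :=
  sum_pos' (fun x' _ => by split_ifs <;> simp [hP x']) ⟨x, mem_univ x, by simpa using hx⟩

lemma marginal_const_mul (a : ℝ) (P : (∀ m, X m) → ℝ) (m : Fin M) (xm : X m) :
    marginal (fun x => a * P x) m xm = a * marginal P m xm := by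
  simp only [marginal, mul_sum, mul_ite, mul_zero]

end Marginal

section Score

variable {M : ℕ} {X : Fin M → Type*} {C : Type*} [Fintype C]

lemma score_nonneg {h : ∀ m, X m → C → ℝ} {p : C → ℝ} (hh : ∀ m xm c, 0 ≤ h m xm c)
    (hp : ∀ c, 0 ≤ p c) (x : ∀ m, X m) : 0 ≤ score h p x :=
  sum_nonneg fun c _ => div_nonneg (prod_nonneg fun m _ => hh m (x m) c) (pow_nonneg (hp c) _)

variable [∀ m, Fintype (X m)] [∀ m, DecidableEq (X m)]

lemma eTCgE_eq_bot_of_score_eq_zero (P : (∀ m, X m) → ℝ) {h : ∀ m, X m → C → ℝ} {p : C → ℝ}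
    {x : ∀ m, X m} (hx : 0 < P x) (hS : score h p x = 0) : eTCgE P h p = ⊥ := by
  have hbot : ∑ x, (P x : EReal) * elog (score h p x) = ⊥ :=
    WithBot.sum_eq_bot_iff.2 ⟨x, mem_univ x, by
      rw [hS, elog, if_pos rfl]; exact EReal.coe_mul_bot_of_pos hx⟩
  rw [eTCgE, hbot, EReal.add_bot, EReal.bot_sub]

lemma eTCgE_eq_coe_of_score_ne_zero (P : (∀ m, X m) → ℝ) {h : ∀ m, X m → C → ℝ} {p : C → ℝ}
    (hS : ∀ x, score h p x ≠ 0) :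
    eTCgE P h p = ((1 + ∑ x, (P x * log (score h p x) -
      (∏ m, marginal P m (x m)) * score h p x) : ℝ) : EReal) := by
  simp only [eTCgE, elog, hS, if_false, ← EReal.coe_mul, ← EReal.coe_finset_sum, sum_sub_distrib]
  norm_cast
  ring

lemma eTCgE_le_of_score_eq_div {P : (∀ m, X m) → ℝ} (hP : ∀ x, 0 < P x)
    {h h' : ∀ m, X m → C → ℝ} {p p' : C → ℝ} (hS : ∀ x, 0 ≤ score h p x)
    (hS' : ∀ x, score h' p' x = P x / ∏ m, marginal P m (x m)) :
    eTCgE P h p ≤ eTCgE P h' p' := by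
  have hQ (x : ∀ m, X m) : 0 < ∏ m, marginal P m (x m) :=
    prod_pos fun m _ => marginal_pos (fun x => (hP x).le) (hP x) m
  by_cases hzero : ∃ x, score h p x = 0
  · obtain ⟨x, hx⟩ := hzero
    rw [eTCgE_eq_bot_of_score_eq_zero P (hP x) hx]
    exact bot_le
  push Not at hzero
  rw [eTCgE_eq_coe_of_score_ne_zero P hzero,
    eTCgE_eq_coe_of_score_ne_zero P fun x => by rw [hS' x]; exact (div_pos (hP x) (hQ x)).ne',
    EReal.coe_le_coe_iff, add_le_add_iff_left]
  refine sum_le_sum fun x _ => ?_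
  rw [hS' x]
  exact mul_log_sub_mul_le_of_pos (hP x) (hQ x) ((hS x).lt_of_ne' (hzero x))

end Score

section Posterior

variable {M : ℕ} {X : Fin M → Type*} {C : Type*} [∀ m, Fintype (X m)] [∀ m, DecidableEq (X m)]
  {W : ((∀ m, X m) × C) → ℝ}

lemma prod_marginal_eq_of_condIndep (hM : M ≠ 0) (hCI : CondIndep W) {c : C}
    (hc : 0 < labelPrior W c) (x : ∀ m, X m) :
    ∏ m, marginal (fun x => W (x, c)) m (x m) = labelPrior W c ^ (M - 1) * W (x, c) := by
  have hW : (fun x => W (x, c)) = fun x => labelPrior W c * condGivenLabel W c x := by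
    ext x; rw [condGivenLabel, mul_div_cancel₀ _ hc.ne']
  calc ∏ m, marginal (fun x => W (x, c)) m (x m)
      = labelPrior W c ^ M * ∏ m, marginal (condGivenLabel W c) m (x m) := by
        simp only [hW, marginal_const_mul, prod_mul_distrib, prod_const, card_univ,
          Fintype.card_fin]
    _ = labelPrior W c ^ (M - 1) * W (x, c) := by
        rw [← hCI c hc x, condGivenLabel, ← pow_sub_one_mul hM]
        field_simp

variable [Fintype C]

lemma score_posterior_labelPrior (hM : M ≠ 0) (hCI : CondIndep W)
    (hprior : ∀ c, 0 < labelPrior W c) (x : ∀ m, X m) :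
    score (posterior W) (labelPrior W) x = dataPmf W x / ∏ m, marginal (dataPmf W) m (x m) := by
  rw [score, dataPmf, sum_div]
  refine sum_congr rfl fun c _ => ?_
  have hpost : ∏ m, posterior W m (x m) c =
      (∏ m, marginal (fun x => W (x, c)) m (x m)) / ∏ m, marginal (dataPmf W) m (x m) :=
    prod_div_distrib _ _
  rw [hpost, prod_marginal_eq_of_condIndep hM hCI (hprior c) x,
    div_right_comm, mul_div_cancel_left₀ _ (pow_ne_zero _ (hprior c).ne')]

end Posterior

theorem bayes_posterior_maximizes_eTCg_general {M : ℕ} (hM : 2 ≤ M)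
    (X : Fin M → Type*) [∀ m, Fintype (X m)] [∀ m, DecidableEq (X m)]
    (C : Type*) [Fintype C]
    (W : ((∀ m, X m) × C) → ℝ)
    (hCI : CondIndep W)
    (hprior : ∀ c, 0 < labelPrior W c)
    (hP : ∀ x : ∀ m, X m, 0 < dataPmf W x) :
    ∀ (h : ∀ m, X m → C → ℝ) (p : C → ℝ),
      (∀ m (xm : X m), (∀ c, 0 ≤ h m xm c) ∧ ∑ c, h m xm c = 1) →
      ((∀ c, 0 < p c) ∧ ∑ c, p c = 1) →
      eTCgE (dataPmf W) h p ≤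
        eTCgE (dataPmf W) (fun m xm c => posterior W m xm c) (labelPrior W) := by
  intro h p hh hp
  exact eTCgE_le_of_score_eq_div hP
    (score_nonneg (fun m xm c => (hh m xm).1 c) fun c => (hp.1 c).le)
    (score_posterior_labelPrior (by omega) hCI hprior)

/-- under conditional independence given the label (strictly positive prior and
data pmf), the Bayesian posterior classifiers `h*^m(x_m)_c = Pr(Y=c|X_m=x_m)` together with the
true prior `p*` maximize the expected total correlation gain: for every family of classifiers
`h^m : X_m → Δ_C` and every strictly positive prior `p ∈ Δ_C`,
`eTCg(h, p) ≤ eTCg(h*, p*)`. -/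
theorem bayes_posterior_maximizes_eTCg {M : ℕ} (hM : 2 ≤ M)
    (X : Fin M → Type*) [∀ m, Fintype (X m)] [∀ m, Nonempty (X m)] [∀ m, DecidableEq (X m)]
    (C : Type*) [Fintype C] [Nonempty C]
    (W : ((∀ m, X m) × C) → ℝ)
    (hW0 : ∀ z, 0 ≤ W z) (hW1 : ∑ z, W z = 1)
    (hCI : CondIndep W)
    (hprior : ∀ c, 0 < labelPrior W c)
    (hP : ∀ x : ∀ m, X m, 0 < dataPmf W x) :
    ∀ (h : ∀ m, X m → C → ℝ) (p : C → ℝ),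
      (∀ m (xm : X m), (∀ c, 0 ≤ h m xm c) ∧ ∑ c, h m xm c = 1) →
      ((∀ c, 0 < p c) ∧ ∑ c, p c = 1) →
      eTCgE (dataPmf W) h p ≤
        eTCgE (dataPmf W) (fun m xm c => posterior W m xm c) (labelPrior W) :=
  bayes_posterior_maximizes_eTCg_general hM X C W hCI hprior hP
end

section
/- Let M ≥ 2, let X_1, …, X_M and a label type C be finite and nonempty, and let W be a pmf on (X_1 × ⋯ × X_M) × C satisfying conditional independence given the label, with label prior p*_c > 0 for all c and data pmf P(x) := ∑_c W(x, c) strictly positive. Then the maximum value of the expected total correlation gain equals the total correlation of the M modalities: eTCg(h*, p*) = TC(P), where h*^m(x_m)_c := Pr(Y = c | X_m = x_m) and p* is the label prior. -/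
/-- The expected total correlation gain
`eTCg(h, p) := 1 + ∑_x P(x)·log S_{h,p}(x) − ∑_x (∏_m P_m(x_m))·S_{h,p}(x)`. -/
noncomputable def eTCg {M : ℕ} {X : Fin M → Type*} {C : Type*} [∀ m, Fintype (X m)]
    [∀ m, DecidableEq (X m)] [Fintype C]
    (P : (∀ m, X m) → ℝ) (h : ∀ m, X m → C → ℝ) (p : C → ℝ) : ℝ :=
  1 + (∑ x : ∀ m, X m, P x * Real.log (score h p x)) -
    ∑ x : ∀ m, X m, (∏ m, marginal P m (x m)) * score h p x

/-- under conditional independence given the label (strictly positive prior and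
data pmf), the maximum value of the expected total correlation gain, attained at the Bayesian
posterior classifiers and the true label prior, equals the total correlation of the `M`
modalities: `eTCg(h*, p*) = TC(P)`. -/
theorem eTCg_at_bayes_eq_totalCorrelation {M : ℕ} (hM : 2 ≤ M)
    (X : Fin M → Type*) [∀ m, Fintype (X m)] [∀ m, Nonempty (X m)] [∀ m, DecidableEq (X m)]
    (C : Type*) [Fintype C] [Nonempty C]
    (W : ((∀ m, X m) × C) → ℝ)
    (hW0 : ∀ z, 0 ≤ W z) (hW1 : ∑ z, W z = 1)
    (hCI : CondIndep W)
    (hprior : ∀ c, 0 < labelPrior W c)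
    (hP : ∀ x : ∀ m, X m, 0 < dataPmf W x) :
    eTCg (dataPmf W) (fun m xm c => posterior W m xm c) (labelPrior W) =
      totalCorrelation (dataPmf W) := by
  classical
  set P := dataPmf W with hPdef
  have hPm : ∀ (m : Fin M) (xm : X m), 0 < marginal P m xm := by
    intro m xm
    apply Finset.sum_pos'
    · intro x _
      split
      · exact (hP x).le
      · exact le_rfl
    · refine ⟨Function.update (Classical.arbitrary _) m xm, Finset.mem_univ _, ?_⟩
      simp [Function.update_self, hP _]
  have hprod : ∀ x : ∀ m, X m, 0 < ∏ m, marginal P m (x m) :=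
    fun x => Finset.prod_pos fun m _ => hPm m (x m)
  have hsumP : ∑ x : ∀ m, X m, P x = 1 := by
    rw [← hW1, Fintype.sum_prod_type]
    rfl
  have hscore : ∀ x : ∀ m, X m,
      score (fun m xm c => posterior W m xm c) (labelPrior W) x
        = P x / ∏ m, marginal P m (x m) := by
    intro x
    unfold score
    have hterm : ∀ c : C, (∏ m, posterior W m (x m) c) / (labelPrior W c) ^ (M - 1)
        = W (x, c) / ∏ m, marginal P m (x m) := by
      intro c
      have hpc := hprior c
      have hpc' : labelPrior W c ≠ 0 := hpc.ne'
      have hmargcond : ∀ (m : Fin M) (xm : X m),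
          marginal (condGivenLabel W c) m xm
            = (∑ x' : ∀ m', X m', if x' m = xm then W (x', c) else 0) / labelPrior W c := by
        intro m xm
        unfold marginal condGivenLabel
        rw [Finset.sum_div]
        refine Finset.sum_congr rfl fun x' _ => ?_
        split <;> simp
      have hpost : ∀ m : Fin M, posterior W m (x m) c
          = labelPrior W c * marginal (condGivenLabel W c) m (x m) / marginal P m (x m) := by
        intro m
        rw [hmargcond, mul_div_cancel₀ _ hpc']
        rfl
      have hCIx : ∏ m, marginal (condGivenLabel W c) m (x m) = W (x, c) / labelPrior W c := by
        rw [← hCI c hpc x]; rfl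
      have hprod' := (hprod x).ne'
      calc (∏ m, posterior W m (x m) c) / (labelPrior W c) ^ (M - 1)
          = (∏ m, labelPrior W c * marginal (condGivenLabel W c) m (x m) / marginal P m (x m))
              / (labelPrior W c) ^ (M - 1) := by
            rw [Finset.prod_congr rfl fun m _ => hpost m]
        _ = ((labelPrior W c) ^ M * (W (x, c) / labelPrior W c)
              / ∏ m, marginal P m (x m)) / (labelPrior W c) ^ (M - 1) := by
            rw [Finset.prod_div_distrib, Finset.prod_mul_distrib, Finset.prod_const,
              Finset.card_univ, Fintype.card_fin, hCIx]
        _ = W (x, c) / ∏ m, marginal P m (x m) := by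
            have hMM : (labelPrior W c) ^ M
                = (labelPrior W c) ^ (M - 1) * labelPrior W c := by
              rw [← pow_succ]
              congr 1
              omega
            rw [hMM]
            have hpow : (labelPrior W c) ^ (M - 1) ≠ 0 := pow_ne_zero _ hpc'
            field_simp
    rw [Finset.sum_congr rfl fun c _ => hterm c, ← Finset.sum_div]
    rfl
  unfold eTCg totalCorrelation
  have h1 : ∑ x : ∀ m, X m, P x * Real.log
      (score (fun m xm c => posterior W m xm c) (labelPrior W) x)
      = ∑ x : ∀ m, X m, P x * Real.log (P x / ∏ m, marginal P m (x m)) := by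
    refine Finset.sum_congr rfl fun x _ => ?_
    rw [hscore x]
  have h2 : ∑ x : ∀ m, X m, (∏ m, marginal P m (x m)) *
      score (fun m xm c => posterior W m xm c) (labelPrior W) x = 1 := by
    rw [← hsumP]
    refine Finset.sum_congr rfl fun x _ => ?_
    rw [hscore x, mul_div_cancel₀ _ (hprod x).ne']
  rw [h1, h2]
  ring
end

section
/- Let M ≥ 2, N ≥ M, let X_1, …, X_M be finite nonempty types, C a finite nonempty label type, and let P be a pmf on X_1 × ⋯ × X_M. Fix classifiers h = (h^1, …, h^M) with h^m : X_m → Δ_C and a prior p ∈ Δ_C with p_c > 0 for all c, and suppose S_{h,p}(x) > 0 for all x with P(x) > 0. For x_1, …, x_N drawn i.i.d. from P, define the empirical total correlation gain TCg^{(N)} := 1 + (1/N)·∑_{i=1}^N log S_{h,p}(x_i) − (1/(N·(N−1)⋯(N−M+1)))·∑_{(i_1, …, i_M) pairwise distinct} ∑_{c ∈ C} (∏_{m=1}^M h^m((x_{i_m})_m)_c)/(p_c)^{M−1}, where (x_i)_m denotes the m-th coordinate of x_i. Then the expectation of TCg^{(N)} over the i.i.d. samples equals the expected total correlation gain: E[TCg^{(N)}]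 = eTCg(h, p) := 1 + ∑_x P(x)·log S_{h,p}(x) − ∑_x (∏_{m=1}^M P_m(x_m))·S_{h,p}(x). -/
/-- The empirical total correlation gain of the samples `xs 0, …, xs (N-1)`:
`TCg^{(N)} := 1 + (1/N)·∑_i log S_{h,p}(x_i)
  − (1/(N·(N−1)⋯(N−M+1)))·∑_{(i_1,…,i_M) pairwise distinct} ∑_c (∏_m h^m((x_{i_m})_m)_c)/(p_c)^{M−1}`. -/
noncomputable def empTCg {M N : ℕ} {X : Fin M → Type*} {C : Type*} [∀ m, Fintype (X m)]
    [Fintype C] (h : ∀ m, X m → C → ℝ) (p : C → ℝ) (xs : Fin N → ∀ m, X m) : ℝ :=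
  1 + (1 / (N : ℝ)) * (∑ i : Fin N, Real.log (score h p (xs i))) -
    (1 / (N.descFactorial M : ℝ)) *
      ∑ ι ∈ Finset.univ.filter (fun ι : Fin M → Fin N => Function.Injective ι),
        ∑ c, (∏ m, h m ((xs (ι m)) m) c) / (p c) ^ (M - 1)


/-!
Everything is linear in the sample, so the expectation splits term by term. Each `log S(x_i)`
depends on a single sample, whose law is `P`. For an injective index tuple `ι`, the subsample
`(x_{ι 1}, …, x_{ι M})` is again i.i.d. with law `P`, so every summand of the U-statistic has the
same expectation and the normalisation by the number `N⋯(N-M+1)` of such tuples makes it unbiased.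
Finally, evaluating coordinate `m` on the `m`-th of `M` independent samples produces a point
whose law is the product of the marginals `∏ₘ Pₘ`.
-/

open Finset

section ProductWeights

variable {R α κ ι : Type*} [CommSemiring R] [Fintype α] [Fintype κ] [Fintype ι] [DecidableEq ι]
  {P : α → R}

theorem sum_pi_prod_eq_one (hP : ∑ a, P a = 1) : ∑ xs : ι → α, ∏ j, P (xs j) = 1 := by
  rw [← Fintype.prod_sum, hP, prod_const_one]

theorem sum_pi_prod_mul_prod_comp_of_injective (hP : ∑ a, P a = 1) {e : κ → ι}
    (he : Function.Injective e) (G : κ → α → R) :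
    ∑ xs : ι → α, (∏ j, P (xs j)) * ∏ m, G m (xs (e m)) = ∏ m, ∑ a, P a * G m a := by
  have prod_fibers (xs : ι → α) :
      ∏ m, G m (xs (e m)) = ∏ j, ∏ m ∈ univ with e m = j, G m (xs j) := by
    rw [← prod_fiberwise univ e]
    exact prod_congr rfl fun j _ => prod_congr rfl fun m hm => by rw [(mem_filter.mp hm).2]
  have sum_fiber (j : ι) :
      ∑ a, P a * ∏ m ∈ univ with e m = j, G m a = ∏ m ∈ univ with e m = j, ∑ a, P a * G m a := by
    by_cases hj : ∃ m, e m = j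
    · obtain ⟨m, rfl⟩ := hj
      have : (univ.filter fun m' => e m' = e m) = {m} := by ext; simp [he.eq_iff]
      simp [this]
    · have : (univ.filter fun m => e m = j) = ∅ := by
        ext m; simpa using fun h => hj ⟨m, h⟩
      simp [this, hP]
  calc ∑ xs : ι → α, (∏ j, P (xs j)) * ∏ m, G m (xs (e m))
      = ∑ xs : ι → α, ∏ j, P (xs j) * ∏ m ∈ univ with e m = j, G m (xs j) := by
        simp_rw [prod_fibers, prod_mul_distrib]
    _ = ∏ j, ∏ m ∈ univ with e m = j, ∑ a, P a * G m a := by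
        rw [← Fintype.prod_sum (fun j a => P a * ∏ m ∈ univ with e m = j, G m a)]
        exact Fintype.prod_congr _ _ sum_fiber
    _ = ∏ m, ∑ a, P a * G m a := prod_fiberwise univ e _

theorem sum_pi_prod_mul_eval (hP : ∑ a, P a = 1) (i : ι) (f : α → R) :
    ∑ xs : ι → α, (∏ j, P (xs j)) * f (xs i) = ∑ a, P a * f a := by
  simpa using sum_pi_prod_mul_prod_comp_of_injective hP (Function.injective_of_subsingleton
    (fun _ : Unit => i)) (fun _ => f)

theorem sum_pi_prod_mul_comp_of_injective [DecidableEq κ] (hP : ∑ a, P a = 1) {e : κ → ι}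
    (he : Function.Injective e) (F : (κ → α) → R) :
    ∑ xs : ι → α, (∏ j, P (xs j)) * F (fun m => xs (e m)) =
      ∑ ys : κ → α, (∏ m, P (ys m)) * F ys := by
  classical
  have indicator (zs : κ → α) :
      F zs = ∑ ys, (∏ m, if zs m = ys m then (1 : R) else 0) * F ys := by
    simp [prod_boole, ← funext_iff]
  calc ∑ xs : ι → α, (∏ j, P (xs j)) * F (fun m => xs (e m))
      = ∑ ys : κ → α, (∑ xs : ι → α,
          (∏ j, P (xs j)) * ∏ m, if xs (e m) = ys m then (1 : R) else 0) * F ys := by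
        simp_rw [sum_mul, mul_assoc]
        rw [sum_comm]
        exact sum_congr rfl fun xs _ => by rw [indicator, mul_sum]
    _ = ∑ ys : κ → α, (∏ m, P (ys m)) * F ys := by
        refine sum_congr rfl fun ys _ => ?_
        rw [sum_pi_prod_mul_prod_comp_of_injective hP he fun m a => if a = ys m then 1 else 0]
        simp

end ProductWeights

theorem card_filter_injective (κ ι : Type*) [Fintype κ] [Fintype ι] [DecidableEq κ]
    [DecidableEq ι] :
    #{e : κ → ι | Function.Injective e} = (Fintype.card ι).descFactorial (Fintype.card κ) := by
  rw [← Fintype.card_subtype, Fintype.card_congr (Equiv.subtypeInjectiveEquivEmbedding _ _),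
    Fintype.card_embedding_eq]

section Averages

variable {R α κ ι : Type*} [Field R] [CharZero R] [Fintype α] [Fintype κ] [Fintype ι]
  [DecidableEq ι] {P : α → R}

theorem sum_pi_prod_mul_mean [Nonempty ι] (hP : ∑ a, P a = 1) (f : α → R) :
    ∑ xs : ι → α, (∏ j, P (xs j)) * (1 / (Fintype.card ι : R) * ∑ i, f (xs i)) =
      ∑ a, P a * f a := by
  have hcard : (Fintype.card ι : R) ≠ 0 := Nat.cast_ne_zero.mpr Fintype.card_ne_zero
  calc ∑ xs : ι → α, (∏ j, P (xs j)) * (1 / (Fintype.card ι : R) * ∑ i, f (xs i))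
      = 1 / (Fintype.card ι : R) * ∑ i, ∑ xs : ι → α, (∏ j, P (xs j)) * f (xs i) := by
        simp_rw [mul_sum, mul_left_comm _ (1 / _ : R)]
        exact sum_comm
    _ = ∑ a, P a * f a := by
        simp_rw [sum_pi_prod_mul_eval hP, sum_const, card_univ, nsmul_eq_mul]
        field_simp

theorem sum_pi_prod_mul_mean_injective [DecidableEq κ] (hP : ∑ a, P a = 1)
    (hκι : Fintype.card κ ≤ Fintype.card ι) (F : (κ → α) → R) :
    ∑ xs : ι → α, (∏ j, P (xs j)) *
        (1 / ((Fintype.card ι).descFactorial (Fintype.card κ) : R) *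
          ∑ e ∈ univ with Function.Injective e, F (fun m => xs (e m))) =
      ∑ ys : κ → α, (∏ m, P (ys m)) * F ys := by
  have hcard : ((Fintype.card ι).descFactorial (Fintype.card κ) : R) ≠ 0 :=
    Nat.cast_ne_zero.mpr (Nat.descFactorial_pos.mpr hκι).ne'
  calc ∑ xs : ι → α, (∏ j, P (xs j)) *
        (1 / ((Fintype.card ι).descFactorial (Fintype.card κ) : R) *
          ∑ e ∈ univ with Function.Injective e, F (fun m => xs (e m)))
      = 1 / ((Fintype.card ι).descFactorial (Fintype.card κ) : R) *
          ∑ e ∈ univ with Function.Injective e,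
            ∑ xs : ι → α, (∏ j, P (xs j)) * F (fun m => xs (e m)) := by
        simp_rw [mul_sum, mul_left_comm _ (1 / _ : R)]
        exact sum_comm
    _ = ∑ ys : κ → α, (∏ m, P (ys m)) * F ys := by
        rw [sum_congr rfl fun e he =>
          sum_pi_prod_mul_comp_of_injective hP (mem_filter.mp he).2 F, sum_const,
          card_filter_injective, nsmul_eq_mul]
        field_simp

end Averages

theorem sum_pi_prod_mul_diag_eq_sum_prod_marginal_mul {M : ℕ} {X : Fin M → Type*}
    [∀ m, Fintype (X m)] [∀ m, DecidableEq (X m)] (P K : (∀ m, X m) → ℝ) :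
    ∑ ys : Fin M → ∀ m, X m, (∏ m, P (ys m)) * K (fun m => ys m m) =
      ∑ x, (∏ m, marginal P m (x m)) * K x := by
  have prod_marginal (x : ∀ m, X m) : ∏ m, marginal P m (x m) =
      ∑ ys : Fin M → ∀ m, X m, if (fun m => ys m m) = x then ∏ m, P (ys m) else 0 := by
    simp [marginal, Fintype.prod_sum, prod_ite_zero, funext_iff]
  simp_rw [prod_marginal, sum_mul, ite_mul, zero_mul]
  rw [sum_comm]
  simp

theorem expectation_empTCg_eq_eTCg_general {M N : ℕ} (hM : 2 ≤ M) (hNM : M ≤ N)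
    (X : Fin M → Type*) [∀ m, Fintype (X m)] [∀ m, DecidableEq (X m)]
    (C : Type*) [Fintype C]
    (P : (∀ m, X m) → ℝ) (hP1 : ∑ x, P x = 1)
    (h : ∀ m, X m → C → ℝ)
    (p : C → ℝ) :
    ∑ xs : Fin N → ∀ m, X m, (∏ i, P (xs i)) * empTCg h p xs =
      1 + (∑ x : ∀ m, X m, P x * Real.log (score h p x)) -
        ∑ x : ∀ m, X m, (∏ m, marginal P m (x m)) * score h p x := by
  have : Nonempty (Fin N) := ⟨⟨0, by omega⟩⟩
  have log_term := sum_pi_prod_mul_mean (ι := Fin N) hP1 fun x => Real.log (score h p x)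
  have ustat_term := sum_pi_prod_mul_mean_injective (ι := Fin N) hP1 (by simpa using hNM)
    fun ys : Fin M → ∀ m, X m => ∑ c, (∏ m, h m (ys m m) c) / p c ^ (M - 1)
  simp only [Fintype.card_fin] at log_term ustat_term
  simp only [empTCg, mul_add, mul_sub, mul_one, sum_add_distrib, sum_sub_distrib,
    sum_pi_prod_eq_one hP1, log_term, ustat_term]
  congr 1
  exact sum_pi_prod_mul_diag_eq_sum_prod_marginal_mul P (score h p)

/-- for `x_1, …, x_N` drawn i.i.d. from `P` (`2 ≤ M ≤ N`), provided
`S_{h,p}(x) > 0` whenever `P(x) > 0`, the expectation of the empirical total correlation gain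
over the `N`-fold product measure equals the expected total correlation gain
`eTCg(h, p) = 1 + ∑_x P(x)·log S_{h,p}(x) − ∑_x (∏_m P_m(x_m))·S_{h,p}(x)`. -/
theorem expectation_empTCg_eq_eTCg {M N : ℕ} (hM : 2 ≤ M) (hNM : M ≤ N)
    (X : Fin M → Type*) [∀ m, Fintype (X m)] [∀ m, Nonempty (X m)] [∀ m, DecidableEq (X m)]
    (C : Type*) [Fintype C] [Nonempty C]
    (P : (∀ m, X m) → ℝ) (hP0 : ∀ x, 0 ≤ P x) (hP1 : ∑ x, P x = 1)
    (h : ∀ m, X m → C → ℝ)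
    (hh : ∀ m (xm : X m), (∀ c, 0 ≤ h m xm c) ∧ ∑ c, h m xm c = 1)
    (p : C → ℝ) (hp0 : ∀ c, 0 < p c) (hp1 : ∑ c, p c = 1)
    (hS : ∀ x : ∀ m, X m, 0 < P x → 0 < score h p x) :
    ∑ xs : Fin N → ∀ m, X m, (∏ i, P (xs i)) * empTCg h p xs =
      1 + (∑ x : ∀ m, X m, P x * Real.log (score h p x)) -
        ∑ x : ∀ m, X m, (∏ m, marginal P m (x m)) * score h p x :=
  expectation_empTCg_eq_eTCg_general hM hNM X C P hP1 h p
end
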